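/- arXiv:2203.10509 — 6 statements merged into one kernel-verified Lean document; each statement's English description precedes it below -/
import Mathlib

section
/- Let P(λ) ∈ ℂ^{n×n}[λ] be an upper-triangular matrix polynomial and D ⊆ ℂ. Then P is hyperstable with respect to D if and only if P is stable with respect to D (i.e., det P(μ) ≠ 0 for all μ ∈ D). -/
/-- `P` is hyperstable with respect to `D`. -/
def Hyperstable {n : ℕ} (P : ℂ → Matrix (Fin n) (Fin n) ℂ) (D : Set ℂ) : Prop :=
  ∀ x : Fin n → ℂ, x ≠ 0 → ∃ y : Fin n → ℂ, y ≠ 0 ∧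
    ∀ μ ∈ D, dotProduct (star y) ((P μ).mulVec x) ≠ 0

/-!
Hyperstability always implies stability: a kernel vector of `P μ` is annihilated by every `y`.
Conversely, if `P` is upper triangular and `x ≠ 0`, let `i` be the last index with `x i ≠ 0`.
Then `(P μ *ᵥ x) i = P μ i i * x i`, which is nonzero on `D` because the diagonal entries of a
triangular matrix multiply to its determinant; so `y = eᵢ` works for all `μ ∈ D` at once.
-/

theorem Hyperstable.det_ne_zero {n : ℕ} {P : ℂ → Matrix (Fin n) (Fin n) ℂ} {D : Set ℂ}
    (hP : Hyperstable P D) : ∀ μ ∈ D, (P μ).det ≠ 0 := by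
  intro μ hμ hdet
  obtain ⟨x, hx, hPx⟩ := (P μ).exists_mulVec_eq_zero_iff.mpr hdet
  obtain ⟨y, -, hy⟩ := hP x hx
  exact hy μ hμ (by rw [hPx, dotProduct_zero])

theorem exists_ne_zero_and_forall_gt_eq_zero {ι M : Type*} [LinearOrder ι]
    [Fintype ι] [Zero M] {x : ι → M} (hx : x ≠ 0) :
    ∃ i, x i ≠ 0 ∧ ∀ j, i < j → x j = 0 := by
  classical
  have hsupp : (Finset.univ.filter fun i => x i ≠ 0).Nonempty := by
    obtain ⟨i, hi⟩ := Function.ne_iff.mp hx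
    exact ⟨i, Finset.mem_filter.mpr ⟨Finset.mem_univ i, hi⟩⟩
  obtain ⟨i, hi, hmax⟩ := Finset.exists_max_image _ id hsupp
  refine ⟨i, (Finset.mem_filter.mp hi).2, fun j hij => ?_⟩
  by_contra hj
  exact (hmax j (Finset.mem_filter.mpr ⟨Finset.mem_univ j, hj⟩)).not_gt hij

theorem Matrix.IsUpperTriangular.mulVec_apply_of_forall_gt_eq_zero {ι R : Type*} [LinearOrder ι]
    [Fintype ι] [NonUnitalNonAssocSemiring R] {A : Matrix ι ι R} (hA : A.IsUpperTriangular)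
    {x : ι → R} {i : ι} (hx : ∀ j, i < j → x j = 0) : A.mulVec x i = A i i * x i := by
  refine Finset.sum_eq_single i (fun j _ hji => ?_) (by simp)
  rcases hji.lt_or_gt with hj | hj
  · simp [hA hj]
  · simp [hx j hj]

theorem hyperstable_of_isUpperTriangular {n : ℕ} {P : ℂ → Matrix (Fin n) (Fin n) ℂ}
    {D : Set ℂ} (htri : ∀ μ, (P μ).IsUpperTriangular) (hdet : ∀ μ ∈ D, (P μ).det ≠ 0) :
    Hyperstable P D := by
  intro x hx
  obtain ⟨i, hxi, hlast⟩ := exists_ne_zero_and_forall_gt_eq_zero hx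
  refine ⟨Pi.single i 1, Pi.single_ne_zero_iff.mpr one_ne_zero, fun μ hμ => ?_⟩
  have hdiag : P μ i i ≠ 0 := by
    have := hdet μ hμ
    rw [Matrix.det_of_isUpperTriangular (htri μ)] at this
    exact Finset.prod_ne_zero_iff.mp this i (Finset.mem_univ i)
  rw [← Pi.single_star, star_one, single_dotProduct, one_mul,
    (htri μ).mulVec_apply_of_forall_gt_eq_zero hlast]
  exact mul_ne_zero hdiag hxi

theorem stmt4 {n : ℕ} (P : Matrix (Fin n) (Fin n) (Polynomial ℂ)) (D : Set ℂ)
    (htri : ∀ i j : Fin n, j < i → P i j = 0) :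
    Hyperstable (fun μ => P.map (Polynomial.eval μ)) D ↔
      ∀ μ ∈ D, (P.map (Polynomial.eval μ)).det ≠ 0 := by
  have hP : P.IsUpperTriangular := fun i j => htri i j
  exact ⟨Hyperstable.det_ne_zero,
    hyperstable_of_isUpperTriangular fun μ => hP.map (Polynomial.evalRingHom μ)⟩
end

section
/- Let D ⊆ ℂ be such that ℂ \ D is convex. If a matrix polynomial P(λ) ∈ ℂ^{n×n}[λ] is hyperstable with respect to D and the entries of P'(λ) are linearly independent polynomials, then P'(λ) is hyperstable with respect to D. -/
open Polynomial Complex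

lemma gauss_lucas_aux {p : ℂ[X]} (hp' : derivative p ≠ 0) {z : ℂ}
    (hz : p.eval z ≠ 0) (h0 : (derivative p).eval z = 0) :
    z ∈ convexHull ℝ (↑p.roots.toFinset : Set ℂ) := by
  classical
  have hp : p ≠ 0 := by rintro rfl; simp at hp'
  have hdeg : p.natDegree ≠ 0 := by
    intro h
    obtain ⟨a, rfl⟩ := natDegree_eq_zero.mp h
    simp at hp'
  have hsp : Multiset.card p.roots = p.natDegree :=
    splits_iff_card_roots.mp (IsAlgClosed.splits p)
  have hfac := C_leadingCoeff_mul_prod_multiset_X_sub_C hsp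
  have ha : p.leadingCoeff ≠ 0 := leadingCoeff_ne_zero.mpr hp
  -- each z - r ≠ 0 for r ∈ roots
  have hzr : ∀ r ∈ p.roots, z - r ≠ 0 := by
    intro r hr h
    have : p.eval r = 0 := isRoot_of_mem_roots hr
    rw [sub_eq_zero] at h
    exact hz (h ▸ this)
  -- derivative formula
  have hder : (derivative p).eval z =
      p.leadingCoeff * (Multiset.map
        (fun r => (Multiset.map (fun s => z - s) (p.roots.erase r)).prod) p.roots).sum := by
    conv_lhs => rw [← hfac]
    rw [derivative_mul, derivative_C, zero_mul, zero_add, eval_mul, eval_C]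
    congr 1
    rw [derivative_prod]
    have he := map_multiset_sum (evalRingHom z) (Multiset.map
      (fun i => (Multiset.map (fun a => X - C a) (p.roots.erase i)).prod * derivative (X - C i))
      p.roots)
    simp only [coe_evalRingHom] at he
    rw [he, Multiset.map_map]
    congr 1
    refine Multiset.map_congr rfl fun r hr => ?_
    simp only [Function.comp_apply, eval_mul, derivative_X_sub_C, eval_one,
      mul_one, eval_multiset_prod, Multiset.map_map]
    exact congrArg Multiset.prod (Multiset.map_congr rfl fun s _ => by simp)
  -- total product
  set Q : ℂ := (Multiset.map (fun s => z - s) p.roots).prod with hQ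
  have hQne : Q ≠ 0 := by
    rw [hQ]
    refine Multiset.prod_ne_zero ?_
    intro h
    obtain ⟨r, hr, h⟩ := Multiset.mem_map.mp h
    exact hzr r hr h
  have herase : ∀ r ∈ p.roots,
      (Multiset.map (fun s => z - s) (p.roots.erase r)).prod = Q * (z - r)⁻¹ := by
    intro r hr
    have h2 : (Multiset.map (fun s => z - s) p.roots).prod
        = (z - r) * (Multiset.map (fun s => z - s) (p.roots.erase r)).prod := by
      conv_lhs => rw [← Multiset.cons_erase hr]
      rw [Multiset.map_cons, Multiset.prod_cons]
    rw [hQ, h2, mul_comm (z - r), mul_assoc, mul_inv_cancel₀ (hzr r hr), mul_one]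
  have hsum : (Multiset.map (fun r => (z - r)⁻¹) p.roots).sum = 0 := by
    have h1 : (Multiset.map
        (fun r => (Multiset.map (fun s => z - s) (p.roots.erase r)).prod) p.roots).sum
        = Q * (Multiset.map (fun r => (z - r)⁻¹) p.roots).sum := by
      rw [← Multiset.sum_map_mul_left]
      exact congrArg Multiset.sum (Multiset.map_congr rfl herase)
    rw [hder, h1] at h0
    rcases mul_eq_zero.mp h0 with h | h
    · exact absurd h ha
    rcases mul_eq_zero.mp h with h | h
    · exact absurd h hQne
    · exact h
  -- conjugate
  have hconj : (Multiset.map (fun r => (z - r) * ((normSq (z - r) : ℂ))⁻¹) p.roots).sum = 0 := by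
    have := congrArg (starRingEnd ℂ) hsum
    rw [map_zero] at this
    rw [← this]
    have h2 := map_multiset_sum (starRingEnd ℂ) (Multiset.map (fun r => (z - r)⁻¹) p.roots)
    rw [Multiset.map_map] at h2
    rw [h2]
    refine congrArg Multiset.sum (Multiset.map_congr rfl fun r hr => ?_)
    have h3 : (starRingEnd ℂ) ((z - r)⁻¹) = (z - r) * ((normSq (z - r) : ℂ))⁻¹ := by
      rw [map_inv₀, Complex.inv_def, Complex.conj_conj, Complex.normSq_conj,
        Complex.ofReal_inv]
    exact h3.symm
  -- center of mass argument
  have hroots_ne : p.roots ≠ 0 := by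
    intro h
    rw [h] at hsp
    simp at hsp
    exact hdeg hsp.symm
  set t := p.roots.toFinset with ht
  have htne : t.Nonempty := by
    obtain ⟨r, hr⟩ := Multiset.exists_mem_of_ne_zero hroots_ne
    exact ⟨r, Multiset.mem_toFinset.mpr hr⟩
  set w : ℂ → ℝ := fun r => (p.roots.count r : ℝ) * (normSq (z - r))⁻¹ with hw
  have hwpos : ∀ r ∈ t, 0 < w r := fun r hr => mul_pos
    (by exact_mod_cast Multiset.count_pos.mpr (Multiset.mem_toFinset.mp hr))
    (inv_pos.mpr (Complex.normSq_pos.mpr (hzr r (Multiset.mem_toFinset.mp hr))))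
  have hWpos : 0 < ∑ r ∈ t, w r := Finset.sum_pos hwpos htne
  have hsum2 : ∑ r ∈ t, w r • (z - r) = 0 := by
    rw [Finset.sum_multiset_map_count] at hconj
    rw [← hconj]
    refine Finset.sum_congr rfl fun r hr => ?_
    simp only [hw, Complex.real_smul, nsmul_eq_mul]
    push_cast
    ring
  have hzc : z = t.centerMass w id := by
    rw [Finset.centerMass]
    have hkey : ∑ r ∈ t, w r • id r = (∑ r ∈ t, w r) • z := by
      calc ∑ r ∈ t, w r • id r = ∑ r ∈ t, (w r • z - w r • (z - r)) := by
            refine Finset.sum_congr rfl fun r hr => ?_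
            simp [smul_sub]
        _ = (∑ r ∈ t, w r) • z - ∑ r ∈ t, w r • (z - r) := by
            rw [Finset.sum_sub_distrib, Finset.sum_smul]
        _ = (∑ r ∈ t, w r) • z := by rw [hsum2, sub_zero]
    rw [hkey, smul_smul, inv_mul_cancel₀ hWpos.ne', one_smul]
  rw [hzc]
  exact Finset.centerMass_mem_convexHull t (fun i hi => (hwpos i hi).le) hWpos
    (fun i hi => Finset.mem_coe.mpr hi)

theorem stmt6 {n : ℕ} (P : Matrix (Fin n) (Fin n) (Polynomial ℂ)) (D : Set ℂ)
    (hD : Convex ℝ ((Dᶜ : Set ℂ)))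
    (hP : Hyperstable (fun μ => P.map (Polynomial.eval μ)) D)
    (hindep : LinearIndependent ℂ
      (fun ij : Fin n × Fin n => Polynomial.derivative (P ij.1 ij.2))) :
    Hyperstable (fun μ => (P.map (Polynomial.derivative)).map (Polynomial.eval μ)) D := by
  intro x hx
  obtain ⟨y, hy, hyP⟩ := hP x hx
  refine ⟨y, hy, ?_⟩
  set c : Fin n × Fin n → ℂ := fun ij => starRingEnd ℂ (y ij.1) * x ij.2 with hc
  set p : Polynomial ℂ := ∑ ij : Fin n × Fin n, Polynomial.C (c ij) * P ij.1 ij.2 with hp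
  have hpeval : ∀ μ, p.eval μ =
      dotProduct (star y) ((P.map (Polynomial.eval μ)).mulVec x) := by
    intro μ
    rw [hp, Polynomial.eval_finset_sum, Fintype.sum_prod_type]
    simp only [dotProduct, Matrix.mulVec, Matrix.map_apply, Pi.star_apply,
      Polynomial.eval_mul, Polynomial.eval_C, Finset.mul_sum, hc]
    refine Finset.sum_congr rfl fun i _ => Finset.sum_congr rfl fun j _ => ?_
    simp [Complex.star_def]
    ring
  have hdp : Polynomial.derivative p =
      ∑ ij : Fin n × Fin n, Polynomial.C (c ij) * Polynomial.derivative (P ij.1 ij.2) := by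
    rw [hp, map_sum]
    exact Finset.sum_congr rfl fun ij _ => by rw [Polynomial.derivative_C_mul]
  have hdeval : ∀ μ, (Polynomial.derivative p).eval μ =
      dotProduct (star y)
        (((P.map (Polynomial.derivative)).map (Polynomial.eval μ)).mulVec x) := by
    intro μ
    rw [hdp, Polynomial.eval_finset_sum, Fintype.sum_prod_type]
    simp only [dotProduct, Matrix.mulVec, Matrix.map_apply, Pi.star_apply,
      Polynomial.eval_mul, Polynomial.eval_C, Finset.mul_sum, hc]
    refine Finset.sum_congr rfl fun i _ => Finset.sum_congr rfl fun j _ => ?_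
    simp [Complex.star_def]
    ring
  have hd : Polynomial.derivative p ≠ 0 := by
    intro h
    have hzero : ∀ ij : Fin n × Fin n, c ij = 0 := by
      refine Fintype.linearIndependent_iff.mp hindep c ?_
      rw [← h, hdp]
      exact Finset.sum_congr rfl fun ij _ => (Polynomial.smul_eq_C_mul (c ij)).symm |>.symm
    obtain ⟨j0, hj0⟩ := Function.ne_iff.mp hx
    apply hy
    funext i
    have := hzero (i, j0)
    rw [hc] at this
    simp only at this
    rcases mul_eq_zero.mp this with h' | h'
    · simpa using congrArg (starRingEnd ℂ) h'
    · exact absurd h' (by simpa using hj0)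
  intro μ hμ hcon
  have h0 : (Polynomial.derivative p).eval μ = 0 := by rw [hdeval]; exact hcon
  have hznz : p.eval μ ≠ 0 := by rw [hpeval]; exact hyP μ hμ
  have hmem := gauss_lucas_aux hd hznz h0
  have hsub : (↑p.roots.toFinset : Set ℂ) ⊆ Dᶜ := by
    intro r hr hrD
    have hroot : p.eval r = 0 :=
      Polynomial.isRoot_of_mem_roots (Multiset.mem_toFinset.mp hr)
    exact hyP r hrD (by rw [← hpeval]; exact hroot)
  exact convexHull_min hsub hD hmem hμ
end

section
/- Let P(λ) = λ²A₂ + λA₁ + A₀ with A_i ∈ ℂ^{n×n}, and let D ⊆ ℂ with 0 ∉ D. If the bivariate matrix polynomial (z₁,z₂) ↦ z₁z₂A₂ + z₂A₁ + A₀ is stable with respect to D² (i.e., (μ₁μ₂A₂ + μ₂A₁ + A₀)x ≠ 0 for all (μ₁,μ₂) ∈ D² and x ≠ 0), then P(λ) is hyperstable with respect to D. -/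
/-!
Fix `x ≠ 0` and put `vᵢ = Aᵢ x`. A vector `y` is the same as a linear functional `f`, and we need
`f (μ² v₂ + μ v₁ + v₀) ≠ 0` for `μ ∈ D`. If `v₀ ∉ span {v₁, v₂}`, take `f` vanishing on `v₁, v₂` with
`f v₀ = 1`. Otherwise `v₀ = α v₁ + β v₂`, the quantity becomes `(μ² + β) f v₂ + (μ + α) f v₁`, and
stability says `(μ₁ μ₂ + β) v₂ + (μ₂ + α) v₁ ≠ 0`. If `v₁ = γ v₂`, take `f v₂ = 1` and use
`μ₁ = μ₂ = μ`. If `v₁ ∉ span {v₂}`, take `f v₁ = 1, f v₂ = 0` when `-α ∉ D`; when `-α ∈ D`, take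
`f v₁ = β, f v₂ = -α`, so the quantity is `μ (β - α μ)`, and stability at `μ₂ = -α` gives
`β - α μ ≠ 0`.
-/

open Module Submodule Matrix

theorem exists_star_dotProduct_eq {R ι : Type*} [CommSemiring R] [StarRing R] [Fintype ι]
    [DecidableEq ι] (f : Module.Dual R (ι → R)) : ∃ y : ι → R, ∀ w, star y ⬝ᵥ w = f w :=
  ⟨star ((dotProductEquiv R ι).symm f), fun w => by
    rw [star_star, ← dotProductEquiv_apply_apply, LinearEquiv.apply_symm_apply]⟩

section VectorSpace

variable {K V : Type*} [Field K] [AddCommGroup V] [Module K V] {D : Set K}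

theorem Module.Dual.exists_apply_eq_one_of_notMem {p : Submodule K V} {v : V} (hv : v ∉ p) :
    ∃ f : Dual K V, f v = 1 ∧ ∀ w ∈ p, f w = 0 := by
  obtain ⟨f, hfv, hpf⟩ := exists_le_ker_of_notMem hv
  exact ⟨(f v)⁻¹ • f, by simp [hfv], fun w hw => by simp [LinearMap.mem_ker.mp (hpf hw)]⟩

theorem Module.Dual.exists_apply_eq_pair {v w : V} (hw : w ≠ 0) (hv : v ∉ K ∙ w) (a b : K) :
    ∃ f : Dual K V, f v = a ∧ f w = b := by
  obtain ⟨g, hgw, -⟩ :=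
    exists_apply_eq_one_of_notMem (p := (⊥ : Submodule K V)) (v := w) (by simpa using hw)
  obtain ⟨h, hhv, hh⟩ := exists_apply_eq_one_of_notMem hv
  have hhw : h w = 0 := hh w (mem_span_singleton_self w)
  exact ⟨b • g + (a - b * g v) • h, by simp [hhv], by simp [hgw, hhw]⟩

theorem exists_dual_forall_ne_zero_of_pair (h0 : 0 ∉ D) {v₁ v₂ : V} {α β : K}
    (hstab : ∀ μ₁ ∈ D, ∀ μ₂ ∈ D, (μ₁ * μ₂ + β) • v₂ + (μ₂ + α) • v₁ ≠ 0) :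
    ∃ f : Dual K V, ∀ μ ∈ D, f ((μ ^ 2 + β) • v₂ + (μ + α) • v₁) ≠ 0 := by
  by_cases hv₁ : v₁ ∈ K ∙ v₂
  · obtain ⟨γ, rfl⟩ := mem_span_singleton.mp hv₁
    have hstab' : ∀ μ ∈ D, ((μ ^ 2 + β) + (μ + α) * γ) • v₂ ≠ 0 := fun μ hμ => by
      simpa [sq, add_smul, mul_smul] using hstab μ hμ μ hμ
    by_cases hv₂ : v₂ = 0
    · exact ⟨0, fun μ hμ => absurd (by simp [hv₂]) (hstab' μ hμ)⟩
    obtain ⟨f, hf, -⟩ := Dual.exists_apply_eq_one_of_notMem (p := (⊥ : Submodule K V))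
      (v := v₂) (by simpa using hv₂)
    refine ⟨f, fun μ hμ => ?_⟩
    simpa [hf, smul_smul, ← add_mul] using (smul_ne_zero_iff.mp (hstab' μ hμ)).1
  by_cases hα : -α ∈ D
  · have hstab' : ∀ μ ∈ D, (μ * -α + β) • v₂ ≠ 0 := fun μ hμ => by
      simpa using hstab μ hμ (-α) hα
    obtain ⟨f, hf₁, hf₂⟩ :=
      Dual.exists_apply_eq_pair (right_ne_zero_of_smul (hstab' _ hα)) hv₁ β (-α)
    refine ⟨f, fun μ hμ => ?_⟩
    have hμ₀ : μ ≠ 0 := fun h => h0 (h ▸ hμ)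
    calc f ((μ ^ 2 + β) • v₂ + (μ + α) • v₁) = μ * (μ * -α + β) := by
          simp only [map_add, map_smul, hf₁, hf₂, smul_eq_mul]; ring
      _ ≠ 0 := mul_ne_zero hμ₀ (left_ne_zero_of_smul (hstab' μ hμ))
  · obtain ⟨f, hf₁, hf₂⟩ := Dual.exists_apply_eq_one_of_notMem hv₁
    refine ⟨f, fun μ hμ => ?_⟩
    have hμα : μ + α ≠ 0 := fun h => hα (eq_neg_of_add_eq_zero_left h ▸ hμ)
    simpa [hf₁, hf₂ v₂ (mem_span_singleton_self v₂)] using hμα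

theorem exists_dual_forall_quadratic_ne_zero (h0 : 0 ∉ D) {v₀ v₁ v₂ : V}
    (hstab : ∀ μ₁ ∈ D, ∀ μ₂ ∈ D, (μ₁ * μ₂) • v₂ + μ₂ • v₁ + v₀ ≠ 0) :
    ∃ f : Dual K V, ∀ μ ∈ D, f (μ ^ 2 • v₂ + μ • v₁ + v₀) ≠ 0 := by
  by_cases hv₀ : v₀ ∈ span K {v₁, v₂}
  · obtain ⟨α, β, rfl⟩ := mem_span_pair.mp hv₀
    have hcomb : ∀ a b : K, a • v₂ + b • v₁ + (α • v₁ + β • v₂) = (a + β) • v₂ + (b + α) • v₁ :=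
      fun a b => by module
    simp only [hcomb] at hstab ⊢
    exact exists_dual_forall_ne_zero_of_pair h0 hstab
  · obtain ⟨f, hf₀, hf⟩ := Dual.exists_apply_eq_one_of_notMem hv₀
    refine ⟨f, fun μ _ => ?_⟩
    simp [hf₀, hf v₁ (subset_span (by simp)), hf v₂ (subset_span (by simp))]

end VectorSpace

theorem stmt9 {n : ℕ} (A₀ A₁ A₂ : Matrix (Fin n) (Fin n) ℂ) (D : Set ℂ) (h0 : (0 : ℂ) ∉ D)
    (hstab : ∀ μ₁ ∈ D, ∀ μ₂ ∈ D, ∀ x : Fin n → ℂ, x ≠ 0 →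
      ((μ₁ * μ₂) • A₂ + μ₂ • A₁ + A₀).mulVec x ≠ 0) :
    Hyperstable (fun μ => μ ^ 2 • A₂ + μ • A₁ + A₀) D := by
  intro x hx
  rcases D.eq_empty_or_nonempty with rfl | ⟨μ₀, hμ₀⟩
  · exact ⟨x, hx, by simp⟩
  have hstab' : ∀ μ₁ ∈ D, ∀ μ₂ ∈ D, (μ₁ * μ₂) • (A₂ *ᵥ x) + μ₂ • (A₁ *ᵥ x) + A₀ *ᵥ x ≠ 0 :=
    fun μ₁ h₁ μ₂ h₂ => by simpa [add_mulVec, smul_mulVec] using hstab μ₁ h₁ μ₂ h₂ x hx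
  obtain ⟨f, hf⟩ := exists_dual_forall_quadratic_ne_zero h0 hstab'
  obtain ⟨y, hy⟩ := exists_star_dotProduct_eq f
  have hPy : ∀ μ ∈ D, star y ⬝ᵥ ((μ ^ 2 • A₂ + μ • A₁ + A₀) *ᵥ x) ≠ 0 := fun μ hμ => by
    simpa [hy, add_mulVec, smul_mulVec] using hf μ hμ
  exact ⟨y, fun hy₀ => hPy μ₀ hμ₀ (by simp [hy₀]), hPy⟩
end

section
/- Let D be an open or closed disc or half-plane. If P(λ) ∈ ℂ^{n×n}[λ] of degree d is hyperstable with respect to D, then for any scalar polynomials p₁,...,p_κ ∈ ℂ[λ] with κ ≥ d, the matrix polynomial Q(λ) = (T_κP)(p₁(λ),...,p_κ(λ)) is hyperstable with respect to E = p₁⁻¹(D) ∩ ... ∩ p_κ⁻¹(D). -/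
/-- `D` is an open or closed disc, or an open or closed half-plane. -/
def IsDiscOrHalfPlane (D : Set ℂ) : Prop :=
  (∃ c : ℂ, ∃ r : ℝ, 0 < r ∧ (D = Metric.ball c r ∨ D = Metric.closedBall c r)) ∨
  (∃ w : ℂ, w ≠ 0 ∧ ∃ t : ℝ,
    D = {z : ℂ | (w * z).re < t} ∨ D = {z : ℂ | (w * z).re ≤ t})

/-- The `j`-th elementary symmetric polynomial in `κ` variables. -/
noncomputable def esymm (κ j : ℕ) (z : Fin κ → ℂ) : ℂ :=
  ∑ t ∈ Finset.univ.powersetCard j, ∏ i ∈ t, z i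

/-- The polarization `T_κ P` of the matrix polynomial `P`. -/
noncomputable def polarize {n : ℕ} (κ : ℕ) (P : Matrix (Fin n) (Fin n) (Polynomial ℂ))
    (z : Fin κ → ℂ) : Matrix (Fin n) (Fin n) ℂ :=
  ∑ j ∈ Finset.range (κ + 1),
    (((κ.choose j : ℂ))⁻¹ * esymm κ j z) • (Matrix.of fun i k => (P i k).coeff j)

/-- A multivariate matrix polynomial is hyperstable with respect to `D^κ`. -/
def MultiHyperstable {n κ : ℕ} (Q : (Fin κ → ℂ) → Matrix (Fin n) (Fin n) ℂ)
    (D : Set ℂ) : Prop :=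
  ∀ x : Fin n → ℂ, x ≠ 0 → ∃ y : Fin n → ℂ, y ≠ 0 ∧
    ∀ z : Fin κ → ℂ, (∀ i, z i ∈ D) →
      dotProduct (star y) ((Q z).mulVec x) ≠ 0


/-
Fix `x ≠ 0` and the `y` that the hyperstability of `P` provides. Then `y* (T_κP)(z) x` is the
polarization `T_κ f (z)` of the scalar polynomial `f = y* P x`, of degree `≤ κ`, so it suffices to
find `ζ ∈ D` with `T_κ f (z) = f(ζ)` whenever all `zᵢ ∈ D`: this is the Grace–Walsh–Szegő
coincidence theorem. It goes by induction on `κ`. Freezing the variable `z₀ = w` turns `T_{κ+1} f`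
into `T_κ` of the normalised polar derivative `f + (w - λ) f' / (κ + 1)`, and by Laguerre's theorem
every value of the latter at a point of `D` is a value of `f` on `D`.

For Laguerre's theorem write `D` as `{u | α|u|² + Re(βu) + γ < 0}` (or `≤ 0`) with `α ≥ 0`. If
`f - c` has no zero in `D` but its polar derivative with pole `w ∈ D` vanishes at `η ∈ D`, then the
points `1/(η - a)`, `a` running over the `m ≤ κ` roots of `f - c`, have sum `κ/(η - w)`. After the
substitution `u = η - 1/t` the quadratic form becomes a concave quadratic in `t`, and Jensen's
inequality for it contradicts the roots lying outside `D` while `w` lies inside.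
-/

open Polynomial Complex Finset ComplexConjugate

lemma Multiset.esymm_cons_succ {R : Type*} [CommSemiring R] (a : R) (s : Multiset R) (j : ℕ) :
    (a ::ₘ s).esymm (j + 1) = s.esymm (j + 1) + a * s.esymm j := by
  simp [Multiset.esymm, Multiset.map_map, Multiset.sum_map_mul_left]

lemma esymm_eq_multiset_esymm (κ j : ℕ) (z : Fin κ → ℂ) :
    esymm κ j z = (univ.val.map z).esymm j := by
  rw [Finset.esymm_map_val, esymm]

lemma esymm_zero (κ : ℕ) (z : Fin κ → ℂ) : esymm κ 0 z = 1 := by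
  simp [esymm]

lemma esymm_of_lt {κ j : ℕ} (h : κ < j) (z : Fin κ → ℂ) : esymm κ j z = 0 := by
  simp [esymm, Finset.powersetCard_eq_empty.mpr (show #(univ : Finset (Fin κ)) < j by simpa)]

lemma esymm_succ (κ j : ℕ) (z : Fin (κ + 1) → ℂ) :
    esymm (κ + 1) (j + 1) z = esymm κ (j + 1) (Fin.tail z) + z 0 * esymm κ j (Fin.tail z) := by
  simp only [esymm_eq_multiset_esymm, Fin.univ_succ, Finset.cons_val, Multiset.map_cons,
    Finset.map_val, Multiset.map_map, Multiset.esymm_cons_succ]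
  rfl

lemma inv_choose_mul_sub_div {κ j : ℕ} (hj : j ≤ κ) :
    (κ.choose j : ℂ)⁻¹ * ((κ + 1 - j) / (κ + 1)) = ((κ + 1).choose j : ℂ)⁻¹ := by
  have h := congrArg (Nat.cast : ℕ → ℂ) (Nat.choose_mul_succ_eq κ j)
  push_cast [Nat.cast_sub (show j ≤ κ + 1 by omega)] at h
  have : (κ.choose j : ℂ) ≠ 0 := by exact_mod_cast (Nat.choose_pos hj).ne'
  have : ((κ + 1).choose j : ℂ) ≠ 0 := by exact_mod_cast (Nat.choose_pos (by omega)).ne'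
  field_simp
  linear_combination -h

lemma inv_choose_mul_succ_div (κ j : ℕ) :
    (κ.choose j : ℂ)⁻¹ * ((j + 1) / (κ + 1)) = ((κ + 1).choose (j + 1) : ℂ)⁻¹ := by
  by_cases hj : j ≤ κ
  · have h := congrArg (Nat.cast : ℕ → ℂ) (Nat.add_one_mul_choose_eq κ j)
    push_cast at h
    have : (κ.choose j : ℂ) ≠ 0 := by exact_mod_cast (Nat.choose_pos hj).ne'
    have : ((κ + 1).choose (j + 1) : ℂ) ≠ 0 := by
      exact_mod_cast (Nat.choose_pos (by omega)).ne'
    field_simp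
    linear_combination -h
  · simp [Nat.choose_eq_zero_of_lt (not_le.mp hj),
      Nat.choose_eq_zero_of_lt (show κ + 1 < j + 1 by omega)]

/-- The polar derivative of `f`, regarded as a polynomial of degree `n`, with pole `w`. -/
noncomputable def polarDeriv (n : ℕ) (w : ℂ) (f : ℂ[X]) : ℂ[X] :=
  C (n : ℂ) * f + (C w - X) * derivative f

lemma eval_polarDeriv (n : ℕ) (w : ℂ) (f : ℂ[X]) (η : ℂ) :
    (polarDeriv n w f).eval η = n * f.eval η + (w - η) * f.derivative.eval η := by
  simp [polarDeriv]

lemma coeff_polarDeriv (n : ℕ) (w : ℂ) (f : ℂ[X]) (j : ℕ) :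
    (polarDeriv n w f).coeff j = (n - j) * f.coeff j + (j + 1) * w * f.coeff (j + 1) := by
  rcases j with _ | j
  · simp [polarDeriv, sub_mul, coeff_derivative]
  · simp [polarDeriv, sub_mul, coeff_derivative, coeff_X_mul]
    ring

lemma natDegree_polarDeriv_le {n : ℕ} {f : ℂ[X]} (hf : f.natDegree ≤ n + 1) (w : ℂ) :
    (polarDeriv (n + 1) w f).natDegree ≤ n := by
  rw [natDegree_le_iff_coeff_eq_zero]
  intro j hj
  rw [coeff_polarDeriv, coeff_eq_zero_of_natDegree_lt (show f.natDegree < j + 1 by omega)]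
  rcases eq_or_lt_of_le (Nat.succ_le_of_lt hj) with rfl | hlt
  · simp
  · simp [coeff_eq_zero_of_natDegree_lt (show f.natDegree < j by omega)]

noncomputable def scalarPolarize (κ : ℕ) (f : ℂ[X]) (z : Fin κ → ℂ) : ℂ :=
  ∑ j ∈ range (κ + 1), (κ.choose j : ℂ)⁻¹ * esymm κ j z * f.coeff j

lemma scalarPolarize_succ (κ : ℕ) (f : ℂ[X]) (z : Fin (κ + 1) → ℂ) :
    scalarPolarize (κ + 1) f z =
      scalarPolarize κ (C (κ + 1 : ℂ)⁻¹ * polarDeriv (κ + 1) (z 0) f) (Fin.tail z) := by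
  calc scalarPolarize (κ + 1) f z
      = ∑ j ∈ range (κ + 2), ((κ + 1).choose j : ℂ)⁻¹ * esymm κ j (Fin.tail z) * f.coeff j
        + ∑ j ∈ range (κ + 1),
            ((κ + 1).choose (j + 1) : ℂ)⁻¹ * (z 0 * esymm κ j (Fin.tail z)) * f.coeff (j + 1) := by
        rw [scalarPolarize, sum_range_succ' _ (κ + 1), sum_range_succ' _ (κ + 1)]
        simp only [esymm_succ, esymm_zero, mul_add, add_mul, sum_add_distrib]
        ring
    _ = ∑ j ∈ range (κ + 1), (((κ + 1).choose j : ℂ)⁻¹ * esymm κ j (Fin.tail z) * f.coeff j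
          + ((κ + 1).choose (j + 1) : ℂ)⁻¹ * (z 0 * esymm κ j (Fin.tail z)) * f.coeff (j + 1)) := by
        rw [sum_range_succ _ (κ + 1), esymm_of_lt (Nat.lt_succ_self κ), sum_add_distrib]
        simp
    _ = _ := by
        refine sum_congr rfl fun j hj => ?_
        rw [coeff_C_mul, coeff_polarDeriv, ← inv_choose_mul_succ_div,
          ← inv_choose_mul_sub_div (Nat.lt_succ_iff.mp (mem_range.mp hj))]
        push_cast
        ring

noncomputable def circleForm (α : ℝ) (β : ℂ) (γ : ℝ) (u : ℂ) : ℝ :=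
  α * normSq u + (β * u).re + γ

def IsCircularRegion (α : ℝ) (β : ℂ) (γ : ℝ) (D : Set ℂ) : Prop :=
  D = {u | circleForm α β γ u < 0} ∨ D = {u | circleForm α β γ u ≤ 0}

/-- Substituting `u = η - 1/t` turns `circleForm` into a quadratic in `t` with leading coefficient
`circleForm α β γ η`, which is concave when `η` lies in the region. -/
lemma normSq_mul_circleForm_sub_inv (α : ℝ) (β : ℂ) (γ : ℝ) (η : ℂ) {t : ℂ} (ht : t ≠ 0) :
    normSq t * circleForm α β γ (η - t⁻¹) =
      circleForm α β γ η * normSq t - ((2 * α * η + conj β) * t).re + α := by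
  have : t.re ^ 2 + t.im ^ 2 ≠ 0 := by simpa [normSq_apply, sq] using normSq_pos.mpr ht |>.ne'
  simp only [circleForm, normSq_apply, sub_re, sub_im, mul_re, mul_im, inv_re, inv_im, add_re,
    add_im, ofReal_re, ofReal_im, conj_re, conj_im, re_ofNat, im_ofNat]
  field_simp
  ring

lemma normSq_sum_le_card_mul {ι : Type*} (s : Finset ι) (t : ι → ℂ) :
    normSq (∑ i ∈ s, t i) ≤ #s * ∑ i ∈ s, normSq (t i) :=
  calc normSq (∑ i ∈ s, t i) = ‖∑ i ∈ s, t i‖ ^ 2 := normSq_eq_norm_sq _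
    _ ≤ (∑ i ∈ s, ‖t i‖) ^ 2 := by gcongr; exact norm_sum_le _ _
    _ ≤ #s * ∑ i ∈ s, ‖t i‖ ^ 2 := sq_sum_le_card_mul_sum_sq
    _ = #s * ∑ i ∈ s, normSq (t i) := by simp only [normSq_eq_norm_sq]

/-- Jensen's inequality for a concave quadratic, padded with `κ - #s` copies of the point `0`,
where the quadratic takes the value `c ≥ 0`. -/
lemma sum_concave_quadratic_le {ι : Type*} (s : Finset ι) (t : ι → ℂ) {κ : ℕ} (hκ : 0 < κ)
    (hs : #s ≤ κ) {a c : ℝ} (ha : a ≤ 0) (hc : 0 ≤ c) (B : ℂ) :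
    ∑ i ∈ s, (a * normSq (t i) - (B * t i).re + c) ≤
      κ * (a * normSq ((∑ i ∈ s, t i) / κ) - (B * ((∑ i ∈ s, t i) / κ)).re + c) := by
  have hκ' : (0 : ℝ) < κ := by exact_mod_cast hκ
  have hs' : (#s : ℝ) ≤ κ := by exact_mod_cast hs
  have hCS : normSq (∑ i ∈ s, t i) ≤ κ * ∑ i ∈ s, normSq (t i) :=
    (normSq_sum_le_card_mul s t).trans (by gcongr; exact sum_nonneg fun i _ => normSq_nonneg _)
  rw [sum_add_distrib, sum_sub_distrib, ← mul_sum, ← re_sum, ← mul_sum, sum_const, nsmul_eq_mul,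
    normSq_div, normSq_natCast, mul_div_assoc' B, div_natCast_re]
  have : a * ∑ i ∈ s, normSq (t i) ≤ a * normSq (∑ i ∈ s, t i) / κ := by
    rw [mul_div_assoc]
    exact mul_le_mul_of_nonpos_left ((div_le_iff₀' hκ').mpr hCS) ha
  have : (#s : ℝ) * c ≤ κ * c := by gcongr
  field_simp
  nlinarith

lemma eval_derivative_div_eval_eq_sum {g : ℂ[X]} {η : ℂ} (h : g.eval η ≠ 0) :
    g.derivative.eval η / g.eval η = ∑ p ∈ g.roots.toEnumFinset, (η - p.1)⁻¹ := by
  rw [(IsAlgClosed.splits g).eval_derivative_div_eval_of_ne_zero h, sum_eq_multiset_sum]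
  nth_rewrite 1 [← Multiset.map_toEnumFinset_fst g.roots]
  rw [Multiset.map_map]
  simp only [Function.comp_def, one_div]

section CircularRegion

variable {α γ : ℝ} {β : ℂ} {D : Set ℂ}

lemma IsCircularRegion.circleForm_nonpos (hD : IsCircularRegion α β γ D) {v : ℂ} (hv : v ∈ D) :
    circleForm α β γ v ≤ 0 := by
  rcases hD with rfl | rfl
  exacts [le_of_lt hv, hv]

lemma IsCircularRegion.mul_circleForm_lt_sum (hD : IsCircularRegion α β γ D) {v : ℂ}
    (hv : v ∈ D) {K : ℝ} (hK : 0 < K) {ι : Type*} {s : Finset ι} (hs : s.Nonempty)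
    {a : ι → ℂ} (ha : ∀ i ∈ s, a i ∉ D) {w : ι → ℝ} (hw : ∀ i ∈ s, 0 < w i) :
    K * circleForm α β γ v < ∑ i ∈ s, w i * circleForm α β γ (a i) := by
  rcases hD with rfl | rfl
  · have : ∀ i ∈ s, 0 ≤ circleForm α β γ (a i) := fun i hi => not_lt.mp (ha i hi)
    calc K * circleForm α β γ v < 0 := mul_neg_of_pos_of_neg hK hv
      _ ≤ _ := sum_nonneg fun i hi => mul_nonneg (hw i hi).le (this i hi)
  · have : ∀ i ∈ s, 0 < circleForm α β γ (a i) := fun i hi => not_le.mp (ha i hi)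
    calc K * circleForm α β γ v ≤ 0 := mul_nonpos_of_nonneg_of_nonpos hK.le hv
      _ < _ := sum_pos (fun i hi => mul_pos (hw i hi) (this i hi)) hs

theorem IsCircularRegion.eval_polarDeriv_ne_zero (hα : 0 ≤ α) (hD : IsCircularRegion α β γ D)
    {κ : ℕ} (hκ : 0 < κ) {g : ℂ[X]} (hdeg : g.natDegree ≤ κ) (hg : ∀ ζ ∈ D, g.eval ζ ≠ 0)
    {η v : ℂ} (hη : η ∈ D) (hv : v ∈ D) : (polarDeriv κ v g).eval η ≠ 0 := by
  intro h0
  have hgη := hg η hη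
  have hκ' : (κ : ℂ) ≠ 0 := by exact_mod_cast hκ.ne'
  have hroots : ∀ p ∈ g.roots.toEnumFinset, p.1 ∉ D ∧ η - p.1 ≠ 0 := by
    intro p hp
    have hp := (mem_roots fun h => hgη (by simp [h])).mp (Multiset.mem_of_mem_toEnumFinset hp)
    exact ⟨fun hpD => hg _ hpD hp, sub_ne_zero.mpr fun h => hgη (h ▸ hp)⟩
  have hprod : (∑ p ∈ g.roots.toEnumFinset, (η - p.1)⁻¹) * (η - v) = κ := by
    rw [← eval_derivative_div_eval_eq_sum hgη]
    rw [eval_polarDeriv] at h0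
    field_simp
    linear_combination -h0
  have hηv : η - v ≠ 0 := fun h => hκ' (by simp [← hprod, h])
  have hmean : (∑ p ∈ g.roots.toEnumFinset, (η - p.1)⁻¹) / κ = (η - v)⁻¹ := by
    rw [div_eq_iff hκ', ← hprod]
    field_simp
  have hZ : g.roots.toEnumFinset.Nonempty := by
    rw [nonempty_iff_ne_empty]
    intro h
    rw [h, sum_empty, zero_mul] at hprod
    exact hκ' hprod.symm
  have key := sum_concave_quadratic_le g.roots.toEnumFinset (fun p => (η - p.1)⁻¹) hκ
    (by simpa using (card_roots' g).trans hdeg) (hD.circleForm_nonpos hη) hα (2 * α * η + conj β)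
  rw [hmean, ← normSq_mul_circleForm_sub_inv α β γ η (inv_ne_zero hηv),
    sum_congr rfl fun p hp =>
      (normSq_mul_circleForm_sub_inv α β γ η (inv_ne_zero (hroots p hp).2)).symm] at key
  refine (hD.mul_circleForm_lt_sum hv (mul_pos (Nat.cast_pos.mpr hκ)
    (normSq_pos.mpr (inv_ne_zero hηv))) hZ (fun p hp => (hroots p hp).1)
    (fun p hp => normSq_pos.mpr (inv_ne_zero (hroots p hp).2))).not_ge ?_
  simpa only [inv_inv, sub_sub_cancel, mul_assoc] using key

theorem IsCircularRegion.exists_eval_eq_polarDeriv (hα : 0 ≤ α) (hD : IsCircularRegion α β γ D)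
    {κ : ℕ} (hκ : 0 < κ) {f : ℂ[X]} (hdeg : f.natDegree ≤ κ) {η v : ℂ} (hη : η ∈ D)
    (hv : v ∈ D) : ∃ ζ ∈ D, f.eval ζ = (κ : ℂ)⁻¹ * (polarDeriv κ v f).eval η := by
  by_contra! h
  set w := (κ : ℂ)⁻¹ * (polarDeriv κ v f).eval η
  refine hD.eval_polarDeriv_ne_zero hα hκ (natDegree_sub_C.trans_le hdeg)
    (fun ζ hζ => by simpa [sub_eq_zero] using h ζ hζ) hη hv ?_
  have hκ' : (κ : ℂ) ≠ 0 := by exact_mod_cast hκ.ne'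
  simp only [w, eval_polarDeriv, derivative_sub, derivative_C, sub_zero, eval_sub, eval_C]
  field_simp
  ring

theorem IsCircularRegion.exists_scalarPolarize_eq_eval (hα : 0 ≤ α)
    (hD : IsCircularRegion α β γ D) (hne : D.Nonempty) {κ : ℕ} {f : ℂ[X]}
    (hf : f.natDegree ≤ κ) {z : Fin κ → ℂ} (hz : ∀ i, z i ∈ D) :
    ∃ ζ ∈ D, scalarPolarize κ f z = f.eval ζ := by
  induction κ generalizing f with
  | zero =>
    obtain ⟨ζ, hζ⟩ := hne
    refine ⟨ζ, hζ, ?_⟩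
    rw [eq_C_of_natDegree_le_zero hf]
    simp [scalarPolarize, esymm_zero]
  | succ κ ih =>
    obtain ⟨η, hη, hpol⟩ := ih (f := C ((κ : ℂ) + 1)⁻¹ * polarDeriv (κ + 1) (z 0) f)
      (z := Fin.tail z) ((natDegree_C_mul_le _ _).trans (natDegree_polarDeriv_le hf (z 0)))
      fun i => hz i.succ
    obtain ⟨ζ, hζ, hlag⟩ := hD.exists_eval_eq_polarDeriv hα κ.succ_pos hf hη (hz 0)
    refine ⟨ζ, hζ, ?_⟩
    rw [scalarPolarize_succ, hpol, hlag, eval_mul, eval_C]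
    push_cast
    rfl

end CircularRegion

lemma IsDiscOrHalfPlane.nonempty {D : Set ℂ} (hD : IsDiscOrHalfPlane D) : D.Nonempty := by
  rcases hD with ⟨c, r, hr, rfl | rfl⟩ | ⟨w, hw, t, rfl | rfl⟩
  · exact ⟨c, Metric.mem_ball_self hr⟩
  · exact ⟨c, Metric.mem_closedBall_self hr.le⟩
  all_goals
    refine ⟨(t - 1) / w, ?_⟩
    rw [Set.mem_ofPred_eq, mul_div_cancel₀ _ hw]
    simp

lemma circleForm_eq_dist_sq_sub (c : ℂ) (r : ℝ) (u : ℂ) :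
    circleForm 1 (-2 * conj c) (normSq c - r ^ 2) u = dist u c ^ 2 - r ^ 2 := by
  rw [dist_eq, ← normSq_eq_norm_sq, normSq_sub]
  simp [circleForm, mul_re]
  ring

lemma IsDiscOrHalfPlane.exists_isCircularRegion {D : Set ℂ} (hD : IsDiscOrHalfPlane D) :
    ∃ α β γ, 0 ≤ α ∧ IsCircularRegion α β γ D := by
  rcases hD with ⟨c, r, hr, hD⟩ | ⟨w, -, t, hD⟩
  · refine ⟨1, -2 * conj c, normSq c - r ^ 2, zero_le_one, ?_⟩
    simp only [IsCircularRegion, circleForm_eq_dist_sq_sub, sub_neg, sub_nonpos]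
    rcases hD with rfl | rfl
    · left; ext u; simp [sq_lt_sq₀ dist_nonneg hr.le]
    · right; ext u; simp [sq_le_sq₀ dist_nonneg hr.le]
  · refine ⟨0, w, -t, le_rfl, ?_⟩
    simp only [IsCircularRegion, circleForm, zero_mul, zero_add, ← sub_eq_add_neg, sub_neg,
      sub_nonpos]
    exact hD

noncomputable def sesqPoly {n : ℕ} (y : Fin n → ℂ) (P : Matrix (Fin n) (Fin n) ℂ[X])
    (x : Fin n → ℂ) : ℂ[X] :=
  ∑ i, ∑ k, C (star (y i) * x k) * P i k

lemma eval_sesqPoly {n : ℕ} (y : Fin n → ℂ) (P : Matrix (Fin n) (Fin n) ℂ[X]) (x : Fin n → ℂ)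
    (μ : ℂ) : (sesqPoly y P x).eval μ = star y ⬝ᵥ (P.map (eval μ)).mulVec x := by
  simp only [sesqPoly, eval_finsetSum, eval_mul, eval_C, dotProduct, Matrix.mulVec, mul_sum,
    Matrix.map_apply, Pi.star_apply]
  exact sum_congr rfl fun i _ => sum_congr rfl fun k _ => by ring

lemma coeff_sesqPoly {n : ℕ} (y : Fin n → ℂ) (P : Matrix (Fin n) (Fin n) ℂ[X]) (x : Fin n → ℂ)
    (j : ℕ) :
    (sesqPoly y P x).coeff j = star y ⬝ᵥ (Matrix.of fun i k => (P i k).coeff j).mulVec x := by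
  simp only [sesqPoly, finsetSum_coeff, coeff_C_mul, dotProduct, Matrix.mulVec, mul_sum,
    Matrix.of_apply, Pi.star_apply]
  exact sum_congr rfl fun i _ => sum_congr rfl fun k _ => by ring

lemma natDegree_sesqPoly_le {n κ : ℕ} (y : Fin n → ℂ) {P : Matrix (Fin n) (Fin n) ℂ[X]}
    (hP : ∀ i k, (P i k).natDegree ≤ κ) (x : Fin n → ℂ) : (sesqPoly y P x).natDegree ≤ κ :=
  natDegree_sum_le_of_forall_le _ _ fun i _ => natDegree_sum_le_of_forall_le _ _ fun k _ =>
    (natDegree_C_mul_le _ _).trans (hP i k)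

lemma star_dotProduct_polarize_mulVec {n κ : ℕ} (y : Fin n → ℂ)
    (P : Matrix (Fin n) (Fin n) ℂ[X]) (z : Fin κ → ℂ) (x : Fin n → ℂ) :
    star y ⬝ᵥ (polarize κ P z).mulVec x = scalarPolarize κ (sesqPoly y P x) z := by
  simp only [polarize, scalarPolarize, Matrix.sum_mulVec, dotProduct_sum, Matrix.smul_mulVec,
    dotProduct_smul, smul_eq_mul, coeff_sesqPoly]

theorem stmt14 {n : ℕ} (P : Matrix (Fin n) (Fin n) (Polynomial ℂ)) (D : Set ℂ)
    (hD : IsDiscOrHalfPlane D) (κ : ℕ)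
    (hκ : ∀ i k : Fin n, (P i k).natDegree ≤ κ)
    (hP : Hyperstable (fun μ => P.map (Polynomial.eval μ)) D)
    (p : Fin κ → Polynomial ℂ) :
    Hyperstable (fun μ => polarize κ P (fun i => (p i).eval μ))
      (⋂ i : Fin κ, (fun μ => (p i).eval μ) ⁻¹' D) := by
  obtain ⟨α, β, γ, hα, hq⟩ := hD.exists_isCircularRegion
  intro x hx
  obtain ⟨y, hy, hyP⟩ := hP x hx
  refine ⟨y, hy, fun μ hμ => ?_⟩
  obtain ⟨ζ, hζ, h⟩ := hq.exists_scalarPolarize_eq_eval hα hD.nonempty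
    (natDegree_sesqPoly_le y hκ x) (fun i => Set.mem_iInter.mp hμ i)
  rw [star_dotProduct_polarize_mulVec, h, eval_sesqPoly]
  exact hyP ζ hζ
end

section
/- Let A₀, A₁, A₂ ∈ ℂ^{n×n} and r > 0 satisfy r‖A₁‖ + r²‖A₂‖ < σ_min(A₀), where σ_min denotes the smallest singular value and ‖·‖ the operator norm. Then for all z₁, z₂ in the open disc D = {z : |z| < r} and all x ≠ 0, (z₁²A₂ + z₂A₁ + A₀)x ≠ 0; consequently P(λ) = λ²A₂ + λA₁ + A₀ is hyperstable with respect to D. -/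
/-- The ℓ²→ℓ² operator norm of a complex matrix. -/
noncomputable def opNorm {n : ℕ} (A : Matrix (Fin n) (Fin n) ℂ) : ℝ :=
  ‖(Matrix.toEuclideanCLM (𝕜 := ℂ) A : EuclideanSpace ℂ (Fin n) →L[ℂ] EuclideanSpace ℂ (Fin n))‖

/-- The smallest singular value of a complex matrix. -/
noncomputable def sigmaMin {n : ℕ} (A : Matrix (Fin n) (Fin n) ℂ) : ℝ :=
  ⨅ x : Metric.sphere (0 : EuclideanSpace ℂ (Fin n)) 1,
    ‖Matrix.toEuclideanCLM (𝕜 := ℂ) A (x : EuclideanSpace ℂ (Fin n))‖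

/-
Write `P(z₁, z₂) x = A₀ x + v` with `v = z₁² A₂ x + z₂ A₁ x`. On the disc,
`‖v‖ ≤ (r ‖A₁‖ + r² ‖A₂‖) ‖x‖ < σ_min(A₀) ‖x‖ ≤ ‖A₀ x‖`, so by Cauchy–Schwarz the test vector
`y = A₀ x` satisfies `|⟪y, v⟫| < ‖y‖² = ⟪y, y⟫`, hence `⟪y, P(z₁, z₂) x⟫ ≠ 0`. Since `y` does not
depend on `z₁, z₂`, the same `y` works on the whole disc, which is hyperstability.
-/

open Matrix WithLp
open scoped InnerProductSpace

theorem inner_add_right_ne_zero_of_norm_lt {𝕜 E : Type*} [RCLike 𝕜] [NormedAddCommGroup E]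
    [InnerProductSpace 𝕜 E] {y v : E} (h : ‖v‖ < ‖y‖) : ⟪y, y + v⟫_𝕜 ≠ 0 := by
  intro h0
  rw [inner_add_right, inner_self_eq_norm_sq_to_K, add_eq_zero_iff_eq_neg'] at h0
  have : ‖y‖ ^ 2 ≤ ‖y‖ * ‖v‖ :=
    calc ‖y‖ ^ 2 = ‖(‖y‖ : 𝕜) ^ 2‖ := by simp
      _ = ‖⟪y, v⟫_𝕜‖ := by rw [h0, norm_neg]
      _ ≤ ‖y‖ * ‖v‖ := norm_inner_le_norm y v
  nlinarith [norm_nonneg v]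

theorem norm_sq_smul_apply_add_smul_apply_le {𝕜 E F : Type*} [NontriviallyNormedField 𝕜]
    [SeminormedAddCommGroup E] [NormedSpace 𝕜 E] [SeminormedAddCommGroup F] [NormedSpace 𝕜 F]
    (T₁ T₂ : E →L[𝕜] F) {z₁ z₂ : 𝕜} {r : ℝ} (h₁ : ‖z₁‖ ≤ r) (h₂ : ‖z₂‖ ≤ r) (x : E) :
    ‖z₁ ^ 2 • T₂ x + z₂ • T₁ x‖ ≤ (r * ‖T₁‖ + r ^ 2 * ‖T₂‖) * ‖x‖ :=
  calc ‖z₁ ^ 2 • T₂ x + z₂ • T₁ x‖ ≤ ‖z₁‖ ^ 2 * (‖T₂‖ * ‖x‖) + ‖z₂‖ * (‖T₁‖ * ‖x‖) := by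
        refine (norm_add_le _ _).trans ?_
        rw [norm_smul, norm_smul, norm_pow]
        gcongr
        exacts [T₂.le_opNorm x, T₁.le_opNorm x]
    _ ≤ r ^ 2 * (‖T₂‖ * ‖x‖) + r * (‖T₁‖ * ‖x‖) := by gcongr
    _ = (r * ‖T₁‖ + r ^ 2 * ‖T₂‖) * ‖x‖ := by ring

theorem sigmaMin_mul_norm_le {n : ℕ} (A : Matrix (Fin n) (Fin n) ℂ)
    (x : EuclideanSpace ℂ (Fin n)) : sigmaMin A * ‖x‖ ≤ ‖toEuclideanCLM (𝕜 := ℂ) A x‖ := by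
  rcases eq_or_ne x 0 with rfl | hx
  · simp
  have hx' : 0 < ‖x‖ := norm_pos_iff.2 hx
  have hu : (‖x‖⁻¹ : ℂ) • x ∈ Metric.sphere (0 : EuclideanSpace ℂ (Fin n)) 1 := by
    simp [norm_smul, inv_mul_cancel₀ hx'.ne']
  have hσ : sigmaMin A ≤ ‖toEuclideanCLM (𝕜 := ℂ) A ((‖x‖⁻¹ : ℂ) • x)‖ :=
    ciInf_le ⟨0, by rintro _ ⟨_, rfl⟩; exact norm_nonneg _⟩ (⟨_, hu⟩ : Metric.sphere _ 1)
  rw [map_smul, norm_smul, norm_inv, Complex.norm_real, norm_norm] at hσ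
  rwa [← le_inv_mul_iff₀' hx']

theorem star_dotProduct_mulVec_eq_inner {n : ℕ} (M : Matrix (Fin n) (Fin n) ℂ) (x y : Fin n → ℂ) :
    star y ⬝ᵥ M *ᵥ x = ⟪toLp 2 y, toEuclideanCLM (𝕜 := ℂ) M (toLp 2 x)⟫_ℂ := by
  rw [toEuclideanCLM_toLp, EuclideanSpace.inner_toLp_toLp, dotProduct_comm]

section

variable {n : ℕ} {A₀ A₁ A₂ : Matrix (Fin n) (Fin n) ℂ} {r : ℝ}

theorem norm_perturbation_lt_norm (h : r * opNorm A₁ + r ^ 2 * opNorm A₂ < sigmaMin A₀)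
    {x : EuclideanSpace ℂ (Fin n)} (hx : x ≠ 0) {z₁ z₂ : ℂ} (h₁ : ‖z₁‖ < r) (h₂ : ‖z₂‖ < r) :
    ‖z₁ ^ 2 • toEuclideanCLM (𝕜 := ℂ) A₂ x + z₂ • toEuclideanCLM (𝕜 := ℂ) A₁ x‖ <
      ‖toEuclideanCLM (𝕜 := ℂ) A₀ x‖ :=
  calc _ ≤ (r * opNorm A₁ + r ^ 2 * opNorm A₂) * ‖x‖ :=
        norm_sq_smul_apply_add_smul_apply_le _ _ h₁.le h₂.le x
    _ < sigmaMin A₀ * ‖x‖ := mul_lt_mul_of_pos_right h (norm_pos_iff.2 hx)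
    _ ≤ _ := sigmaMin_mul_norm_le A₀ x

theorem star_mulVec_dotProduct_ne_zero (h : r * opNorm A₁ + r ^ 2 * opNorm A₂ < sigmaMin A₀)
    (x : Fin n → ℂ) (hx : x ≠ 0) {z₁ z₂ : ℂ} (h₁ : ‖z₁‖ < r) (h₂ : ‖z₂‖ < r) :
    star (A₀ *ᵥ x) ⬝ᵥ (z₁ ^ 2 • A₂ + z₂ • A₁ + A₀) *ᵥ x ≠ 0 := by
  have hx' : toLp 2 x ≠ 0 := by simpa using hx
  rw [star_dotProduct_mulVec_eq_inner, ← toEuclideanCLM_toLp]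
  simp only [map_add, map_smul, _root_.add_apply, _root_.smul_apply]
  rw [add_comm]
  exact inner_add_right_ne_zero_of_norm_lt (norm_perturbation_lt_norm h hx' h₁ h₂)

end

theorem stmt16 {n : ℕ} (A₀ A₁ A₂ : Matrix (Fin n) (Fin n) ℂ) (r : ℝ) (hr : 0 < r)
    (h : r * opNorm A₁ + r ^ 2 * opNorm A₂ < sigmaMin A₀) :
    (∀ z₁ z₂ : ℂ, ‖z₁‖ < r → ‖z₂‖ < r → ∀ x : Fin n → ℂ, x ≠ 0 →
      (z₁ ^ 2 • A₂ + z₂ • A₁ + A₀).mulVec x ≠ 0) ∧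
    Hyperstable (fun μ => μ ^ 2 • A₂ + μ • A₁ + A₀) {z : ℂ | ‖z‖ < r} := by
  have key := star_mulVec_dotProduct_ne_zero h
  refine ⟨fun z₁ z₂ h₁ h₂ x hx hPx => key x hx h₁ h₂ (by rw [hPx, dotProduct_zero]), ?_⟩
  intro x hx
  refine ⟨A₀ *ᵥ x, fun hA₀x => ?_, fun μ hμ => key x hx hμ hμ⟩
  simpa [hA₀x] using key x hx (z₁ := 0) (z₂ := 0) (by rwa [norm_zero]) (by rwa [norm_zero])
end

section
/- Let R₀, R₁, R₂ ∈ ℂ^{n×n} be Hermitian positive semi-definite, J ∈ ℂ^{n×n} skew-Hermitian, and assume ker R₀ ∩ ker R₁ ∩ ker R₂ ∩ ker J = {0}. Then the bivariate matrix polynomial (z₁,z₂) ↦ z₁z₂R₂ + z₂(J+R₁) + R₀ is stable with respect to H², where H = {z ∈ ℂ : Re z > 0}: for all μ₁, μ₂ ∈ H and x ∈ ℂ^n \ {0}, (μ₁μ₂R₂ + μ₂(J+R₁) + R₀)x ≠ 0. Consequently P(λ) = λ²R₂ + λ(J+R₁) + R₀ is hyperstable with respect to the open right half-plane. -/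
/-!
Take the quadratic form of the pencil at `x`: with `cᵢ = x* Rᵢ x ≥ 0` and `x* J x` purely
imaginary, multiplying `μ₁μ₂c₂ + μ₂(x* J x + c₁) + c₀ = 0` by `conj μ₂` and taking real parts gives
`|μ₂|² Re μ₁ c₂ + |μ₂|² c₁ + Re μ₂ c₀ = 0`, a sum of nonnegative terms with positive weights.
So every `cᵢ` vanishes, hence `Rᵢ x = 0` by semidefiniteness, and then the pencil sends `x` to
`μ₂ J x`, which is nonzero by the kernel condition. For hyperstability at `x`, the test vector is
`y = x` unless all `Rᵢ x` vanish, in which case it is `y = J x`.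
-/

open scoped ComplexConjugate ComplexOrder

open Matrix

namespace Complex

theorem eq_zero_of_mul_mul_add_mul_add_eq_zero {μ₁ μ₂ c₀ c₁ c₂ j : ℂ}
    (hμ₁ : 0 < μ₁.re) (hμ₂ : 0 < μ₂.re) (hc₀ : 0 ≤ c₀) (hc₁ : 0 ≤ c₁) (hc₂ : 0 ≤ c₂)
    (hj : j.re = 0) (h : μ₁ * μ₂ * c₂ + μ₂ * (j + c₁) + c₀ = 0) :
    c₀ = 0 ∧ c₁ = 0 ∧ c₂ = 0 := by
  obtain ⟨hc₀, hi₀⟩ := nonneg_iff.mp hc₀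
  obtain ⟨hc₁, hi₁⟩ := nonneg_iff.mp hc₁
  obtain ⟨hc₂, hi₂⟩ := nonneg_iff.mp hc₂
  have hsq : 0 < normSq μ₂ := normSq_pos.mpr (ne_zero_of_re_pos hμ₂)
  have hre : normSq μ₂ * μ₁.re * c₂.re + normSq μ₂ * c₁.re + μ₂.re * c₀.re = 0 := by
    have hconj_mul := congrArg re (congrArg (conj μ₂ * ·) h)
    simp only [mul_zero, zero_re] at hconj_mul
    rw [← hconj_mul]
    simp only [mul_re, mul_im, add_re, add_im, conj_re, conj_im, normSq_apply,
      ← hi₀, ← hi₁, ← hi₂, hj]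
    ring
  have t₂ := mul_nonneg (mul_pos hsq hμ₁).le hc₂
  have t₁ := mul_nonneg hsq.le hc₁
  have t₀ := mul_nonneg hμ₂.le hc₀
  refine ⟨ext ?_ hi₀.symm, ext ?_ hi₁.symm, ext ?_ hi₂.symm⟩
  · exact (mul_eq_zero.mp (by linarith)).resolve_left hμ₂.ne'
  · exact (mul_eq_zero.mp (by linarith)).resolve_left hsq.ne'
  · exact (mul_eq_zero.mp (by linarith)).resolve_left (mul_pos hsq hμ₁).ne'

end Complex

namespace Matrix

variable {ι : Type*} [Fintype ι]

theorem re_star_dotProduct_mulVec_eq_zero {J : Matrix ι ι ℂ} (hJ : Jᴴ = -J) (x : ι → ℂ) :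
    (star x ⬝ᵥ J *ᵥ x).re = 0 := by
  have hconj : star (star x ⬝ᵥ J *ᵥ x) = -(star x ⬝ᵥ J *ᵥ x) := by
    rw [← star_dotProduct, star_mulVec, hJ, ← dotProduct_mulVec, neg_mulVec, dotProduct_neg]
  have hre := congrArg Complex.re hconj
  simp only [Complex.star_def, Complex.conj_re, Complex.neg_re] at hre
  linarith

theorem star_dotProduct_pencil_mulVec (R₀ R₁ R₂ J : Matrix ι ι ℂ) (μ₁ μ₂ : ℂ) (x : ι → ℂ) :
    star x ⬝ᵥ ((μ₁ * μ₂) • R₂ + μ₂ • (J + R₁) + R₀) *ᵥ x =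
      μ₁ * μ₂ * (star x ⬝ᵥ R₂ *ᵥ x) + μ₂ * (star x ⬝ᵥ J *ᵥ x + star x ⬝ᵥ R₁ *ᵥ x) +
        star x ⬝ᵥ R₀ *ᵥ x := by
  simp only [add_mulVec, smul_mulVec, dotProduct_add, dotProduct_smul, smul_eq_mul]

theorem pencil_mulVec_of_mulVec_eq_zero {R₀ R₁ R₂ : Matrix ι ι ℂ} (J : Matrix ι ι ℂ)
    {x : ι → ℂ} (h₀ : R₀ *ᵥ x = 0) (h₁ : R₁ *ᵥ x = 0) (h₂ : R₂ *ᵥ x = 0) (ν μ : ℂ) :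
    (ν • R₂ + μ • (J + R₁) + R₀) *ᵥ x = μ • J *ᵥ x := by
  simp only [add_mulVec, smul_mulVec, h₀, h₁, h₂, smul_zero, add_zero, zero_add]

theorem mulVec_eq_zero_of_star_dotProduct_pencil_mulVec_eq_zero {R₀ R₁ R₂ J : Matrix ι ι ℂ}
    (hR₀ : R₀.PosSemidef) (hR₁ : R₁.PosSemidef) (hR₂ : R₂.PosSemidef) (hJ : Jᴴ = -J)
    {μ₁ μ₂ : ℂ} (hμ₁ : 0 < μ₁.re) (hμ₂ : 0 < μ₂.re) {x : ι → ℂ}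
    (h : star x ⬝ᵥ ((μ₁ * μ₂) • R₂ + μ₂ • (J + R₁) + R₀) *ᵥ x = 0) :
    R₀ *ᵥ x = 0 ∧ R₁ *ᵥ x = 0 ∧ R₂ *ᵥ x = 0 := by
  rw [star_dotProduct_pencil_mulVec] at h
  obtain ⟨e₀, e₁, e₂⟩ := Complex.eq_zero_of_mul_mul_add_mul_add_eq_zero hμ₁ hμ₂
    (hR₀.dotProduct_mulVec_nonneg x) (hR₁.dotProduct_mulVec_nonneg x)
    (hR₂.dotProduct_mulVec_nonneg x) (re_star_dotProduct_mulVec_eq_zero hJ x) h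
  exact ⟨(hR₀.dotProduct_mulVec_zero_iff x).mp e₀, (hR₁.dotProduct_mulVec_zero_iff x).mp e₁,
    (hR₂.dotProduct_mulVec_zero_iff x).mp e₂⟩

end Matrix

theorem stmt17 {n : ℕ} (R₀ R₁ R₂ J : Matrix (Fin n) (Fin n) ℂ)
    (hR₀ : R₀.PosSemidef) (hR₁ : R₁.PosSemidef) (hR₂ : R₂.PosSemidef)
    (hJ : J.conjTranspose = -J)
    (hker : ∀ x : Fin n → ℂ, R₀.mulVec x = 0 → R₁.mulVec x = 0 → R₂.mulVec x = 0 →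
      J.mulVec x = 0 → x = 0) :
    (∀ μ₁ μ₂ : ℂ, 0 < μ₁.re → 0 < μ₂.re → ∀ x : Fin n → ℂ, x ≠ 0 →
      ((μ₁ * μ₂) • R₂ + μ₂ • (J + R₁) + R₀).mulVec x ≠ 0) ∧
    Hyperstable (fun μ => μ ^ 2 • R₂ + μ • (J + R₁) + R₀) {z : ℂ | 0 < z.re} := by
  constructor
  · intro μ₁ μ₂ hμ₁ hμ₂ x hx hPx
    obtain ⟨e₀, e₁, e₂⟩ := mulVec_eq_zero_of_star_dotProduct_pencil_mulVec_eq_zero hR₀ hR₁ hR₂ hJ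
      hμ₁ hμ₂ (by rw [hPx, dotProduct_zero])
    rw [pencil_mulVec_of_mulVec_eq_zero J e₀ e₁ e₂, smul_eq_zero] at hPx
    exact hx (hker x e₀ e₁ e₂ (hPx.resolve_left (Complex.ne_zero_of_re_pos hμ₂)))
  · intro x hx
    by_cases hR : R₀ *ᵥ x = 0 ∧ R₁ *ᵥ x = 0 ∧ R₂ *ᵥ x = 0
    · obtain ⟨e₀, e₁, e₂⟩ := hR
      have hJx : J *ᵥ x ≠ 0 := fun h => hx (hker x e₀ e₁ e₂ h)
      refine ⟨J *ᵥ x, hJx, fun μ (hμ : 0 < μ.re) => ?_⟩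
      rw [pencil_mulVec_of_mulVec_eq_zero J e₀ e₁ e₂, dotProduct_smul, smul_eq_mul]
      exact mul_ne_zero (Complex.ne_zero_of_re_pos hμ) (mt dotProduct_star_self_eq_zero.mp hJx)
    · refine ⟨x, hx, fun μ (hμ : 0 < μ.re) h => hR ?_⟩
      simp only [sq] at h
      exact mulVec_eq_zero_of_star_dotProduct_pencil_mulVec_eq_zero hR₀ hR₁ hR₂ hJ hμ hμ h
end
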